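/- arXiv:2410.02668 — 2 statements merged into one kernel-verified Lean document; each statement's English description precedes it below -/
import Mathlib

section
/- Let k be a field, n ≥ 1, and let f₁, …, fₙ ∈ k[x₁, …, xₙ] be polynomials such that for each i with 1 ≤ i ≤ n there exists a natural number dᵢ with xᵢ^{dᵢ} ∈ (f₁, …, fₙ). Let m = (x₁, …, xₙ) denote the maximal ideal generated by the variables, and let k[x₁, …, xₙ]_m denote the localization of the polynomial ring at the prime ideal m. Then the quotient of k[x₁, …, xₙ]_m by the ideal generated by the images of f₁, …, fₙ is a finite-dimensional k-vector space. -/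
/-!
Write `R = k[x₁, …, xₙ]`, `m = (x₁, …, xₙ)` and `J = (f₁, …, fₙ)`. The hypothesis says that
every `xᵢ` is nilpotent in `R ⧸ J`, so `R ⧸ J` is generated as a `k`-algebra by finitely many
integral elements and is finite-dimensional. An element `s ∉ m` has a nonzero constant term, so
modulo `J` it is a unit plus a nilpotent, hence a unit; therefore `R ⧸ J` surjects onto
`R_m ⧸ J R_m`.
-/

open MvPolynomial

/-- The ideal `(x₁, …, xₙ)` generated by the variables is prime (it is the kernel of the
constant-coefficient map to the field `k`). -/
instance spanRangeX_isPrime (k : Type*) [Field k] (n : ℕ) :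
    (Ideal.span (Set.range (X : Fin n → MvPolynomial (Fin n) k))).IsPrime := by
  have h : Ideal.span (Set.range (X : Fin n → MvPolynomial (Fin n) k)) =
      RingHom.ker (constantCoeff : MvPolynomial (Fin n) k →+* k) := by
    ext p
    rw [RingHom.mem_ker, ← Set.image_univ, mem_ideal_span_X_image]
    constructor
    · intro h
      rw [constantCoeff_eq]
      by_contra hc
      obtain ⟨i, -, hi⟩ := h 0 (by simpa [MvPolynomial.mem_support_iff] using hc)
      simp at hi
    · intro h m hm
      rcases eq_or_ne m 0 with rfl | hm0
      · exact absurd (by simpa [constantCoeff_eq, MvPolynomial.mem_support_iff] using hm)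
          (not_not.mpr h)
      · obtain ⟨i, hi⟩ := Finsupp.ne_iff.mp hm0
        exact ⟨i, Set.mem_univ i, by simpa using hi⟩
  rw [h]
  exact RingHom.ker_isPrime _

theorem Ideal.Quotient.isNilpotent_mk_of_mem_radical {R : Type*} [CommRing R] {J : Ideal R}
    {x : R} (hx : x ∈ J.radical) : IsNilpotent (Ideal.Quotient.mk J x) :=
  let ⟨n, hn⟩ := hx
  ⟨n, by rw [← map_pow, Ideal.Quotient.eq_zero_iff_mem]; exact hn⟩

namespace MvPolynomial

variable {σ R : Type*} [CommRing R]

theorem sub_C_constantCoeff_mem_span_range_X (p : MvPolynomial σ R) :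
    p - C (constantCoeff p) ∈ Ideal.span (Set.range (X : σ → MvPolynomial σ R)) := by
  induction p using MvPolynomial.induction_on with
  | C a => simp
  | add p q hp hq =>
    rw [map_add, map_add, add_sub_add_comm]
    exact add_mem hp hq
  | mul_X p i _ =>
    rw [map_mul, constantCoeff_X, mul_zero, map_zero, sub_zero]
    exact Ideal.mul_mem_left _ _ (Ideal.subset_span ⟨i, rfl⟩)

theorem isUnit_quotientMk_of_isUnit_constantCoeff {J : Ideal (MvPolynomial σ R)}
    (hJ : ∀ i, X i ∈ J.radical) {p : MvPolynomial σ R} (hp : IsUnit (constantCoeff p)) :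
    IsUnit (Ideal.Quotient.mk J p) := by
  have hnil : IsNilpotent (Ideal.Quotient.mk J (p - C (constantCoeff p))) :=
    Ideal.Quotient.isNilpotent_mk_of_mem_radical <|
      Ideal.span_le.mpr (Set.range_subset_iff.mpr hJ) (sub_C_constantCoeff_mem_span_range_X p)
  simpa using
    hnil.isUnit_add_left_of_commute ((hp.map C).map (Ideal.Quotient.mk J)) (Commute.all _ _)

theorem finite_quotient_of_X_mem_radical [Finite σ] {J : Ideal (MvPolynomial σ R)}
    (hJ : ∀ i, X i ∈ J.radical) : Module.Finite R (MvPolynomial σ R ⧸ J) := by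
  have hint : ∀ x ∈ Set.range (Ideal.Quotient.mkₐ R J ∘ X), IsIntegral R x := by
    rintro _ ⟨i, rfl⟩
    rw [Function.comp_apply, Ideal.Quotient.mkₐ_eq_mk]
    obtain ⟨n, hn⟩ := Ideal.Quotient.isNilpotent_mk_of_mem_radical (hJ i)
    exact IsIntegral.of_pow n.succ_pos (by rw [pow_succ, hn, zero_mul]; exact isIntegral_zero)
  have hadjoin : Algebra.adjoin R (Set.range (Ideal.Quotient.mkₐ R J ∘ X)) = ⊤ := by
    rw [Set.range_comp, Algebra.adjoin_image, adjoin_range_X, Algebra.map_top,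
      AlgHom.range_eq_top]
    exact Ideal.Quotient.mkₐ_surjective R J
  rw [Module.finite_def, ← Algebra.top_toSubmodule, ← hadjoin]
  exact fg_adjoin_of_finite (Set.finite_range _) hint

end MvPolynomial

theorem IsLocalization.surjective_quotientMap_of_isUnit {R S : Type*} [CommRing R] [CommRing S]
    [Algebra R S] (M : Submonoid R) [IsLocalization M S] {I : Ideal S} {J : Ideal R}
    (H : J ≤ I.comap (algebraMap R S)) (hM : ∀ m ∈ M, IsUnit (Ideal.Quotient.mk J m)) :
    Function.Surjective (Ideal.quotientMap I (algebraMap R S) H) := by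
  intro s
  obtain ⟨s, rfl⟩ := Ideal.Quotient.mk_surjective s
  obtain ⟨r, m, rfl⟩ := IsLocalization.exists_mk'_eq M s
  obtain ⟨v, hv⟩ := (hM m m.2).exists_right_inv
  refine ⟨Ideal.Quotient.mk J r * v, ?_⟩
  calc Ideal.quotientMap I (algebraMap R S) H (Ideal.Quotient.mk J r * v)
      = Ideal.Quotient.mk I (algebraMap R S r) * Ideal.quotientMap I (algebraMap R S) H v := by
        rw [map_mul, Ideal.quotientMap_mk]
    _ = Ideal.Quotient.mk I (IsLocalization.mk' S r m * algebraMap R S m) *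
          Ideal.quotientMap I (algebraMap R S) H v := by
        rw [IsLocalization.mk'_spec]
    _ = Ideal.Quotient.mk I (IsLocalization.mk' S r m) *
          Ideal.quotientMap I (algebraMap R S) H (Ideal.Quotient.mk J m * v) := by
        rw [map_mul, map_mul, Ideal.quotientMap_mk, mul_assoc]
    _ = Ideal.Quotient.mk I (IsLocalization.mk' S r m) := by
        rw [hv, map_one, mul_one]

theorem finiteDimensional_localization_quotient_of_pow_X_mem_span_general
    {k : Type*} [Field k] (n : ℕ)
    (f : Fin n → MvPolynomial (Fin n) k)
    (hf : ∀ i : Fin n, ∃ d : ℕ,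
      (X i : MvPolynomial (Fin n) k) ^ d ∈ Ideal.span (Set.range f)) :
    FiniteDimensional k
      (Localization.AtPrime
          (Ideal.span (Set.range (X : Fin n → MvPolynomial (Fin n) k))) ⧸
        Ideal.span (Set.range fun j => algebraMap (MvPolynomial (Fin n) k)
          (Localization.AtPrime
            (Ideal.span (Set.range (X : Fin n → MvPolynomial (Fin n) k)))) (f j))) := by
  set m := Ideal.span (Set.range (X : Fin n → MvPolynomial (Fin n) k))
  set J := Ideal.span (Set.range f)
  have hX : ∀ i, X i ∈ J.radical := hf
  have hunit : ∀ s ∈ m.primeCompl, IsUnit (Ideal.Quotient.mk J s) := fun s hs =>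
    isUnit_quotientMk_of_isUnit_constantCoeff hX <| isUnit_iff_ne_zero.mpr fun h0 =>
      hs (by simpa [h0] using sub_C_constantCoeff_mem_span_range_X s)
  set I := Ideal.span (Set.range fun j => algebraMap _ (Localization.AtPrime m) (f j))
  let g := IsScalarTower.toAlgHom k (MvPolynomial (Fin n) k) (Localization.AtPrime m)
  have hJ : J ≤ I.comap g :=
    Ideal.span_le.mpr <| Set.range_subset_iff.mpr fun j => Ideal.subset_span ⟨j, rfl⟩
  have := finite_quotient_of_X_mem_radical hX
  exact Module.Finite.of_surjective (Ideal.quotientMapₐ I g hJ).toLinearMap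
    (IsLocalization.surjective_quotientMap_of_isUnit m.primeCompl hJ hunit)

/-- If for each `i` some power `xᵢ^{dᵢ}` lies in `(f₁, …, fₙ)`, then the
quotient of the localization `k[x₁, …, xₙ]_{(x₁, …, xₙ)}` by the ideal generated by the
images of the `fⱼ` is a finite-dimensional `k`-vector space. -/
theorem finiteDimensional_localization_quotient_of_pow_X_mem_span
    {k : Type*} [Field k] (n : ℕ) (hn : 1 ≤ n)
    (f : Fin n → MvPolynomial (Fin n) k)
    (hf : ∀ i : Fin n, ∃ d : ℕ,
      (X i : MvPolynomial (Fin n) k) ^ d ∈ Ideal.span (Set.range f)) :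
    FiniteDimensional k
      (Localization.AtPrime
          (Ideal.span (Set.range (X : Fin n → MvPolynomial (Fin n) k))) ⧸
        Ideal.span (Set.range fun j => algebraMap (MvPolynomial (Fin n) k)
          (Localization.AtPrime
            (Ideal.span (Set.range (X : Fin n → MvPolynomial (Fin n) k)))) (f j))) :=
  finiteDimensional_localization_quotient_of_pow_X_mem_span_general n f hf
end

section
/- Let k be a field and n ≥ 1, and let f₁, …, fₙ ∈ k[x₁, …, xₙ] be polynomials forming a unimodular row, i.e. the ideal (f₁, …, fₙ) is the unit ideal of k[x₁, …, xₙ]. Then there exist polynomials H₁, …, Hₙ in the polynomial ring k[x₁, …, xₙ, t] in n+1 variables and constants c₁, …, cₙ ∈ k such that: (i) the ideal (H₁, …, Hₙ) is the unit ideal of k[x₁, …, xₙ, t]; (ii) substituting t = 0 into Hⱼ yields fⱼ for every j; and (iii) substituting t = 1 into Hⱼ yields the constant polynomial cⱼ for every j. -/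
open MvPolynomial

/-- A unimodular row `(f₁, …, fₙ)` over `k[x₁, …, xₙ]` is connected to a
constant row by a naive homotopy: there is a unimodular row `(H₁, …, Hₙ)` over
`k[x₁, …, xₙ, t]` with `Hⱼ|_{t=0} = fⱼ` and `Hⱼ|_{t=1}` a constant `cⱼ ∈ k`.
Here `k[x₁, …, xₙ, t]` is `MvPolynomial (Fin n ⊕ Unit) k`, with `Sum.inl i ↦ xᵢ` and
`Sum.inr () ↦ t`; substituting `t = a` is `aeval (Sum.elim X (fun _ => a))`. -/
theorem unimodular_row_naively_homotopic_to_constant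
    {k : Type*} [Field k] (n : ℕ) (hn : 1 ≤ n)
    (f : Fin n → MvPolynomial (Fin n) k)
    (hf : Ideal.span (Set.range f) = ⊤) :
    ∃ (H : Fin n → MvPolynomial (Fin n ⊕ Unit) k) (c : Fin n → k),
      Ideal.span (Set.range H) = ⊤ ∧
      (∀ j, aeval (Sum.elim X fun _ => (0 : MvPolynomial (Fin n) k)) (H j) = f j) ∧
      (∀ j, aeval (Sum.elim X fun _ => (1 : MvPolynomial (Fin n) k)) (H j) = C (c j)) := by
  set φ : MvPolynomial (Fin n) k →ₐ[k] MvPolynomial (Fin n ⊕ Unit) k :=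
    aeval (fun i => (1 - X (Sum.inr ())) * X (Sum.inl i)) with hφ
  refine ⟨fun j => φ (f j), fun j => eval (fun _ => 0) (f j), ?_, ?_, ?_⟩
  · have : Ideal.map (φ : MvPolynomial (Fin n) k →+* MvPolynomial (Fin n ⊕ Unit) k)
        (Ideal.span (Set.range f)) = Ideal.span (Set.range fun j => φ (f j)) := by
      rw [Ideal.map_span, ← Set.range_comp]
      rfl
    rw [hf, Ideal.map_top] at this
    exact this.symm
  · intro j
    dsimp only
    have hc : (aeval (Sum.elim X fun _ => (0 : MvPolynomial (Fin n) k))).comp φ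
        = aeval (X : Fin n → MvPolynomial (Fin n) k) := by
      apply MvPolynomial.algHom_ext
      intro i
      simp [hφ]
    calc (aeval (Sum.elim X fun _ => (0 : MvPolynomial (Fin n) k))) (φ (f j))
        = ((aeval (Sum.elim X fun _ => (0 : MvPolynomial (Fin n) k))).comp φ) (f j) := rfl
      _ = f j := by rw [hc]; simp [aeval_X_left]
  · intro j
    dsimp only
    have hc : (aeval (Sum.elim X fun _ => (1 : MvPolynomial (Fin n) k))).comp φ
        = aeval (fun _ : Fin n => (0 : MvPolynomial (Fin n) k)) := by
      apply MvPolynomial.algHom_ext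
      intro i
      simp [hφ]
    calc (aeval (Sum.elim X fun _ => (1 : MvPolynomial (Fin n) k))) (φ (f j))
        = ((aeval (Sum.elim X fun _ => (1 : MvPolynomial (Fin n) k))).comp φ) (f j) := rfl
      _ = C ((eval fun _ => 0) (f j)) := by
          rw [hc, aeval_zero', eval_zero', algebraMap_eq]
end
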